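/- Let (Z_t)_{t ∈ ℤ} be a stationary 𝒵-valued process with β-mixing coefficients β(k), let a, μ' ≥ 1 be integers, let M > 0, let ℱ be a finite set of measurable functions from 𝒵 to [0, M], and for each ℓ_f ∈ ℱ set L(f) = E[ℓ_f(Z_1)] and L̂^spaced(f) = (1/μ') Σ_{k=1}^{μ'} ℓ_f(Z_{1+(k−1)a}). Let ν' be the product measure on 𝒵^{μ'} each of whose factors is the law of Z_1. Then for every ε > 0: P( ∃ ℓ_f ∈ ℱ : L(f) − L̂^spaced(f) ≥ ε ) ≤ ν'( (z_1, …, z_{μ'}) : ∃ ℓ_f ∈ ℱ, L(f) − (1/μ') Σ_{k=1}^{μ'} ℓ_f(z_k) ≥ ε ) + (μ' − 1) β(a). -/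

import Mathlib

open MeasureTheory ProbabilityTheory

/-- Total variation distance between two measures. -/
noncomputable def tvDist {α : Type*} [MeasurableSpace α] (μ ν : Measure α) : ℝ :=
  ⨆ A : {A : Set α // MeasurableSet A}, |(μ A).toReal - (ν A).toReal|

/-- β-mixing coefficient of the process `Z` under `P`: the supremum over `t` of the
total variation distance between the joint law of `((Z s)_{s ≤ t}, (Z s)_{s ≥ t+k})`
and the product of the marginal laws. -/
noncomputable def betaMix {Ω 𝒵 : Type*} [MeasurableSpace Ω] [MeasurableSpace 𝒵]
    (P : Measure Ω) (Z : ℤ → Ω → 𝒵) (k : ℕ) : ℝ :=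
  ⨆ t : ℤ, tvDist
    (P.map (fun ω => (fun s : {s : ℤ // s ≤ t} => Z s ω,
                      fun s : {s : ℤ // t + k ≤ s} => Z s ω)))
    ((P.map (fun ω => fun s : {s : ℤ // s ≤ t} => Z s ω)).prod
      (P.map (fun ω => fun s : {s : ℤ // t + k ≤ s} => Z s ω)))

/-- Stationarity of the process `Z` under `P`. -/
def Stationary {Ω 𝒵 : Type*} [MeasurableSpace Ω] [MeasurableSpace 𝒵]
    (P : Measure Ω) (Z : ℤ → Ω → 𝒵) : Prop :=
  ∀ s : ℤ, P.map (fun ω => fun t : ℤ => Z (t + s) ω) = P.map (fun ω => fun t : ℤ => Z t ω)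

/-! The spaced sample `(Z (t 0), …, Z (t (n-1)))`, with gaps `t j - t i ≥ a`, is compared
with `ν ^ n` by peeling off its first observation. The pair (first observation, rest) is a
measurable image of (past up to `t 0`, future from `t 0 + a`), so replacing its joint law by
the product of its marginals costs at most `β(a)` in total variation; the first marginal is
`ν` by stationarity, and the rest is handled by induction, since a product with a fixed factor
does not increase total variation. The `n - 1` splittings add up to `(n - 1) β(a)`. -/

section TotalVariation

variable {α β : Type*} [MeasurableSpace α] [MeasurableSpace β]
  {μ ν ρ : Measure α} [IsProbabilityMeasure μ] [IsProbabilityMeasure ν] [IsProbabilityMeasure ρ]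

lemma abs_measure_toReal_sub_le_two (A : Set α) : |(μ A).toReal - (ν A).toReal| ≤ 2 := by
  have hμ : (μ A).toReal ≤ 1 := measureReal_le_one
  have hν : (ν A).toReal ≤ 1 := measureReal_le_one
  rw [abs_sub_le_iff]
  constructor <;> linarith [(μ A).toReal_nonneg, (ν A).toReal_nonneg]

lemma tvDist_le_two : tvDist μ ν ≤ 2 :=
  ciSup_le fun A => abs_measure_toReal_sub_le_two (μ := μ) (ν := ν) A

lemma abs_sub_le_tvDist {A : Set α} (hA : MeasurableSet A) :
    |(μ A).toReal - (ν A).toReal| ≤ tvDist μ ν :=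
  le_ciSup (f := fun A : {A : Set α // MeasurableSet A} => |(μ A).toReal - (ν A).toReal|)
    ⟨2, by rintro _ ⟨A, rfl⟩; exact abs_measure_toReal_sub_le_two (μ := μ) (ν := ν) A⟩ ⟨A, hA⟩

lemma tvDist_nonneg : 0 ≤ tvDist μ ν :=
  (abs_nonneg _).trans (abs_sub_le_tvDist (μ := μ) (ν := ν) MeasurableSet.empty)

lemma measure_le_add_tvDist {A : Set α} (hA : MeasurableSet A) :
    μ A ≤ ν A + ENNReal.ofReal (tvDist μ ν) := by
  rw [← ENNReal.ofReal_toReal (measure_ne_top μ A), ← ENNReal.ofReal_toReal (measure_ne_top ν A),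
    ← ENNReal.ofReal_add ENNReal.toReal_nonneg tvDist_nonneg]
  have := (le_abs_self _).trans (abs_sub_le_tvDist (μ := μ) (ν := ν) hA)
  exact ENNReal.ofReal_le_ofReal (by linarith)

/-- A one-sided bound suffices: applied to `Aᶜ` it gives the other side. -/
lemma tvDist_le_of_forall_le {c : ℝ}
    (h : ∀ A, MeasurableSet A → (μ A).toReal ≤ (ν A).toReal + c) : tvDist μ ν ≤ c := by
  refine ciSup_le fun ⟨A, hA⟩ => abs_sub_le_iff.2 ⟨by linarith [h A hA], ?_⟩
  have hc := h Aᶜ hA.compl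
  rw [← measureReal_def, ← measureReal_def, probReal_compl_eq_one_sub hA,
    probReal_compl_eq_one_sub hA] at hc
  simp only [measureReal_def] at hc
  linarith

lemma tvDist_self : tvDist μ μ = 0 :=
  le_antisymm (tvDist_le_of_forall_le fun _ _ => by simp) tvDist_nonneg

lemma tvDist_triangle : tvDist μ ρ ≤ tvDist μ ν + tvDist ν ρ :=
  tvDist_le_of_forall_le fun A hA => by
    linarith [le_abs_self ((μ A).toReal - (ν A).toReal), abs_sub_le_tvDist (μ := μ) (ν := ν) hA,
      le_abs_self ((ν A).toReal - (ρ A).toReal), abs_sub_le_tvDist (μ := ν) (ν := ρ) hA]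

lemma tvDist_map_le {f : α → β} (hf : Measurable f) :
    tvDist (μ.map f) (ν.map f) ≤ tvDist μ ν := by
  have := Measure.isProbabilityMeasure_map (μ := μ) hf.aemeasurable
  have := Measure.isProbabilityMeasure_map (μ := ν) hf.aemeasurable
  refine tvDist_le_of_forall_le fun A hA => ?_
  rw [Measure.map_apply hf hA, Measure.map_apply hf hA]
  linarith [le_abs_self ((μ (f ⁻¹' A)).toReal - (ν (f ⁻¹' A)).toReal),
    abs_sub_le_tvDist (μ := μ) (ν := ν) (hf hA)]

lemma tvDist_map_measurableEquiv (e : α ≃ᵐ β) :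
    tvDist (μ.map e) (ν.map e) = tvDist μ ν := by
  refine le_antisymm (tvDist_map_le e.measurable) ?_
  have := Measure.isProbabilityMeasure_map (μ := μ) e.measurable.aemeasurable
  have := Measure.isProbabilityMeasure_map (μ := ν) e.measurable.aemeasurable
  simpa only [MeasurableEquiv.map_symm_map] using
    tvDist_map_le (μ := μ.map e) (ν := ν.map e) e.symm.measurable

lemma tvDist_prod_left_le (ξ : Measure β) [IsProbabilityMeasure ξ] :
    tvDist (ξ.prod μ) (ξ.prod ν) ≤ tvDist μ ν := by
  refine tvDist_le_of_forall_le fun T hT => ?_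
  have hle : ξ.prod μ T ≤ ξ.prod ν T + ENNReal.ofReal (tvDist μ ν) := by
    rw [Measure.prod_apply hT, Measure.prod_apply hT]
    calc ∫⁻ x, μ (Prod.mk x ⁻¹' T) ∂ξ
        ≤ ∫⁻ x, (ν (Prod.mk x ⁻¹' T) + ENNReal.ofReal (tvDist μ ν)) ∂ξ :=
          lintegral_mono fun x => measure_le_add_tvDist (hT.preimage measurable_prodMk_left)
      _ = ∫⁻ x, ν (Prod.mk x ⁻¹' T) ∂ξ + ENNReal.ofReal (tvDist μ ν) := by
          rw [lintegral_add_right _ measurable_const, lintegral_const, measure_univ, mul_one]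
  have := ENNReal.toReal_mono (by finiteness) hle
  rwa [ENNReal.toReal_add (measure_ne_top _ _) ENNReal.ofReal_ne_top,
    ENNReal.toReal_ofReal tvDist_nonneg] at this

end TotalVariation

section Mixing

variable {Ω 𝒵 : Type*} [MeasurableSpace Ω] [MeasurableSpace 𝒵] {P : Measure Ω} {Z : ℤ → Ω → 𝒵}

lemma Stationary.map_eq (hstat : Stationary P Z) (hZ : ∀ t, Measurable (Z t)) (s t : ℤ) :
    P.map (Z s) = P.map (Z t) := by
  have h := congrArg (Measure.map fun z : ℤ → 𝒵 => z t) (hstat (s - t))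
  rw [Measure.map_map (measurable_pi_apply t) (measurable_pi_lambda _ fun _ => hZ _),
    Measure.map_map (measurable_pi_apply t) (measurable_pi_lambda _ fun _ => hZ _)] at h
  simpa only [Function.comp_def, add_sub_cancel] using h

variable [IsProbabilityMeasure P]

lemma tvDist_map_pair_le_betaMix (hZ : ∀ t, Measurable (Z t)) (k : ℕ) (t : ℤ)
    {β γ : Type*} [MeasurableSpace β] [MeasurableSpace γ]
    {g : ({s : ℤ // s ≤ t} → 𝒵) → β} {h : ({s : ℤ // t + k ≤ s} → 𝒵) → γ}
    (hg : Measurable g) (hh : Measurable h) :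
    tvDist (P.map fun ω => (g fun s => Z s ω, h fun s => Z s ω))
      ((P.map fun ω => g fun s => Z s ω).prod (P.map fun ω => h fun s => Z s ω))
      ≤ betaMix P Z k := by
  have hpast : ∀ t : ℤ, Measurable fun ω (s : {s : ℤ // s ≤ t}) => Z s ω :=
    fun _ => measurable_pi_lambda _ fun _ => hZ _
  have hfut : ∀ t : ℤ, Measurable fun ω (s : {s : ℤ // t + k ≤ s}) => Z s ω :=
    fun _ => measurable_pi_lambda _ fun _ => hZ _
  have := Measure.isProbabilityMeasure_map (μ := P) ((hpast t).prodMk (hfut t)).aemeasurable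
  have := Measure.isProbabilityMeasure_map (μ := P) (hpast t).aemeasurable
  have := Measure.isProbabilityMeasure_map (μ := P) (hfut t).aemeasurable
  have hJ : P.map (fun ω => (g fun s => Z s ω, h fun s => Z s ω))
      = (P.map fun ω => ((fun s : {s : ℤ // s ≤ t} => Z s ω),
          (fun s : {s : ℤ // t + k ≤ s} => Z s ω))).map (Prod.map g h) :=
    (Measure.map_map (hg.prodMap hh) ((hpast t).prodMk (hfut t))).symm
  have hK : (P.map fun ω => g fun s => Z s ω).prod (P.map fun ω => h fun s => Z s ω)
      = ((P.map fun ω (s : {s : ℤ // s ≤ t}) => Z s ω).prod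
          (P.map fun ω (s : {s : ℤ // t + k ≤ s}) => Z s ω)).map (Prod.map g h) := by
    rw [← Measure.map_prod_map _ _ hg hh, Measure.map_map hg (hpast t),
      Measure.map_map hh (hfut t)]
    rfl
  rw [hJ, hK]
  refine (tvDist_map_le (hg.prodMap hh)).trans ?_
  unfold betaMix
  refine le_ciSup (f := fun u : ℤ => tvDist
    (P.map fun ω => ((fun s : {s : ℤ // s ≤ u} => Z s ω), fun s : {s : ℤ // u + k ≤ s} => Z s ω))
    ((P.map fun ω (s : {s : ℤ // s ≤ u}) => Z s ω).prod
      (P.map fun ω (s : {s : ℤ // u + k ≤ s}) => Z s ω))) ⟨2, ?_⟩ t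
  rintro _ ⟨u, rfl⟩
  have := Measure.isProbabilityMeasure_map (μ := P) ((hpast u).prodMk (hfut u)).aemeasurable
  have := Measure.isProbabilityMeasure_map (μ := P) (hpast u).aemeasurable
  have := Measure.isProbabilityMeasure_map (μ := P) (hfut u).aemeasurable
  exact tvDist_le_two

end Mixing

section SpacedSample

variable {Ω 𝒵 : Type*} [MeasurableSpace Ω] [MeasurableSpace 𝒵] {P : Measure Ω}
  [IsProbabilityMeasure P] {Z : ℤ → Ω → 𝒵} {ν : Measure 𝒵}

theorem tvDist_map_pi_le_betaMix (hZ : ∀ t, Measurable (Z t)) (hν : ∀ s, P.map (Z s) = ν)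
    (a : ℕ) {n : ℕ} (hn : 1 ≤ n) (t : Fin n → ℤ) (ht : ∀ i j, i < j → t i + a ≤ t j) :
    tvDist (P.map fun ω k => Z (t k) ω) (Measure.pi fun _ => ν)
      ≤ ((n : ℝ) - 1) * betaMix P Z a := by
  have : IsProbabilityMeasure ν := hν 0 ▸ Measure.isProbabilityMeasure_map (hZ 0).aemeasurable
  induction n, hn using Nat.le_induction with
  | base =>
    have hlaw : P.map (fun ω k => Z (t k) ω) = Measure.pi fun _ => ν := by
      convert ((measurePreserving_funUnique ν (Fin 1)).symm _).map_eq using 1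
      rw [← hν (t 0), Measure.map_map (MeasurableEquiv.measurable _) (hZ _)]
      · congr with ω k
        rw [Fin.fin_one_eq_zero k]
        rfl
      · congr -- the `Fintype (Fin 1)` instances `Fin.fintype` and `Unique.fintype`
    rw [hlaw, tvDist_self]
    simp
  | succ n hn ih =>
    let e := MeasurableEquiv.piFinSuccAbove (fun _ : Fin (n + 1) => 𝒵) 0
    have hV := measurable_pi_lambda (fun ω (k : Fin (n + 1)) => Z (t k) ω) fun _ => hZ _
    have hW := measurable_pi_lambda (fun ω (k : Fin n) => Z (t k.succ) ω) fun _ => hZ _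
    have := Measure.isProbabilityMeasure_map (μ := P) hV.aemeasurable
    have := Measure.isProbabilityMeasure_map (μ := P) hW.aemeasurable
    have := Measure.isProbabilityMeasure_map (μ := P) ((hZ (t 0)).prodMk hW).aemeasurable
    have hsplit : (P.map fun ω k => Z (t k) ω).map e
        = P.map fun ω => (Z (t 0) ω, fun k : Fin n => Z (t k.succ) ω) := by
      rw [Measure.map_map e.measurable hV]
      congr with ω
    have hpeel : tvDist (P.map fun ω => (Z (t 0) ω, fun k : Fin n => Z (t k.succ) ω))
        (ν.prod (P.map fun ω k => Z (t k.succ) ω)) ≤ betaMix P Z a := by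
      have key := tvDist_map_pair_le_betaMix (P := P) hZ a (t 0)
        (g := fun z => z ⟨t 0, le_rfl⟩)
        (h := fun z (k : Fin n) => z ⟨t k.succ, ht 0 k.succ k.succ_pos⟩)
        (measurable_pi_apply _) (measurable_pi_lambda _ fun _ => measurable_pi_apply _)
      simpa only [hν] using key
    have hrest := ih (fun k => t k.succ) fun i j hij => ht _ _ (Fin.succ_lt_succ_iff.2 hij)
    calc tvDist (P.map fun ω k => Z (t k) ω) (Measure.pi fun _ => ν)
        = tvDist ((P.map fun ω k => Z (t k) ω).map e) ((Measure.pi fun _ => ν).map e) :=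
          (tvDist_map_measurableEquiv e).symm
      _ = tvDist (P.map fun ω => (Z (t 0) ω, fun k : Fin n => Z (t k.succ) ω))
          (ν.prod (Measure.pi fun _ => ν)) := by
          rw [hsplit, (measurePreserving_piFinSuccAbove (fun _ => ν) 0).map_eq]
      _ ≤ betaMix P Z a + ((n : ℝ) - 1) * betaMix P Z a :=
          tvDist_triangle.trans (add_le_add hpeel ((tvDist_prod_left_le ν).trans hrest))
      _ = ((n + 1 : ℕ) - 1 : ℝ) * betaMix P Z a := by push_cast; ring

theorem toReal_measure_spaced_mem_le (hZ : ∀ t, Measurable (Z t)) (hν : ∀ s, P.map (Z s) = ν)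
    (a : ℕ) {n : ℕ} (hn : 1 ≤ n) (t : Fin n → ℤ) (ht : ∀ i j, i < j → t i + a ≤ t j)
    {S : Set (Fin n → 𝒵)} (hS : MeasurableSet S) :
    (P {ω | (fun k => Z (t k) ω) ∈ S}).toReal
      ≤ (Measure.pi (fun _ => ν) S).toReal + ((n : ℝ) - 1) * betaMix P Z a := by
  have : IsProbabilityMeasure ν := hν 0 ▸ Measure.isProbabilityMeasure_map (hZ 0).aemeasurable
  have hV := measurable_pi_lambda (fun ω k => Z (t k) ω) fun _ => hZ _
  have := Measure.isProbabilityMeasure_map (μ := P) hV.aemeasurable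
  have hclose := (le_abs_self _).trans ((abs_sub_le_tvDist hS).trans
    (tvDist_map_pi_le_betaMix hZ hν a hn t ht))
  rw [Measure.map_apply hV hS] at hclose
  exact sub_le_iff_le_add'.1 hclose

end SpacedSample

theorem spaced_points_coupling_deviation_general
    {Ω 𝒵 : Type*} [MeasurableSpace Ω] [MeasurableSpace 𝒵]
    (P : Measure Ω) [IsProbabilityMeasure P]
    (Z : ℤ → Ω → 𝒵) (hZmeas : ∀ t, Measurable (Z t))
    (hstat : Stationary P Z)
    (a μ' : ℕ) (hμ' : 1 ≤ μ')
    (ℱ : Finset (𝒵 → ℝ))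
    (hFmeas : ∀ f ∈ ℱ, Measurable f)
    (ν1 : Measure 𝒵)
    (hν1 : ν1 = P.map (Z 1))
    (ε : ℝ) :
    (P {ω | ∃ f ∈ ℱ,
        ∫ ω', f (Z 1 ω') ∂P
          - (1 / μ') * ∑ k : Fin μ', f (Z ((1 + (k : ℕ) * a : ℕ) : ℤ) ω)
          ≥ ε}).toReal
      ≤ (Measure.pi (fun _ : Fin μ' => ν1) {x | ∃ f ∈ ℱ,
          ∫ ω', f (Z 1 ω') ∂P - (1 / μ') * ∑ k : Fin μ', f (x k) ≥ ε}).toReal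
        + ((μ' : ℝ) - 1) * betaMix P Z a := by
  have hS : MeasurableSet {x : Fin μ' → 𝒵 | ∃ f ∈ ℱ,
      ∫ ω', f (Z 1 ω') ∂P - (1 / μ') * ∑ k : Fin μ', f (x k) ≥ ε} := by
    have hdev (f) (hf : f ∈ ℱ) : Measurable fun x : Fin μ' → 𝒵 =>
        ∫ ω', f (Z 1 ω') ∂P - (1 / μ') * ∑ k : Fin μ', f (x k) := by
      have := hFmeas f hf
      fun_prop
    convert ℱ.measurableSet_biUnion fun f hf =>
      measurableSet_le (measurable_const (a := ε)) (hdev f hf) using 1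
    ext
    simp
  have hgap (i j : Fin μ') (hij : i < j) :
      ((1 + (i : ℕ) * a : ℕ) : ℤ) + a ≤ ((1 + (j : ℕ) * a : ℕ) : ℤ) := by
    have := Nat.mul_le_mul_right a (Fin.lt_def.1 hij)
    push_cast
    nlinarith
  exact toReal_measure_spaced_mem_le hZmeas (fun s => hν1 ▸ hstat.map_eq hZmeas s 1) a hμ' _ hgap hS

/-- Coupling step for the spaced-points technique: the probability that some `f ∈ ℱ`
has a deviation at least `ε` between its risk `L f = E[f (Z 1)]` and its empirical
risk on the spaced sample `(Z 1, Z (1+a), …, Z (1+(μ'-1)a))` is at most the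
corresponding probability for an i.i.d. sample (under the product measure with
factors the law `ν1` of `Z 1`) plus `(μ'-1)β(a)`. -/
theorem spaced_points_coupling_deviation
    {Ω 𝒵 : Type*} [MeasurableSpace Ω] [MeasurableSpace 𝒵]
    (P : Measure Ω) [IsProbabilityMeasure P]
    (Z : ℤ → Ω → 𝒵) (hZmeas : ∀ t, Measurable (Z t))
    (hstat : Stationary P Z)
    (a μ' : ℕ) (ha : 1 ≤ a) (hμ' : 1 ≤ μ')
    (M : ℝ) (hM : 0 < M)
    (ℱ : Finset (𝒵 → ℝ))
    (hFmeas : ∀ f ∈ ℱ, Measurable f)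
    (hFbdd : ∀ f ∈ ℱ, ∀ z, f z ∈ Set.Icc (0 : ℝ) M)
    (ν1 : Measure 𝒵) [IsProbabilityMeasure ν1]
    (hν1 : ν1 = P.map (Z 1))
    (ε : ℝ) (hε : 0 < ε) :
    (P {ω | ∃ f ∈ ℱ,
        ∫ ω', f (Z 1 ω') ∂P
          - (1 / μ') * ∑ k : Fin μ', f (Z ((1 + (k : ℕ) * a : ℕ) : ℤ) ω)
          ≥ ε}).toReal
      ≤ (Measure.pi (fun _ : Fin μ' => ν1) {x | ∃ f ∈ ℱ,
          ∫ ω', f (Z 1 ω') ∂P - (1 / μ') * ∑ k : Fin μ', f (x k) ≥ ε}).toReal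
        + ((μ' : ℝ) - 1) * betaMix P Z a :=
  spaced_points_coupling_deviation_general P Z hZmeas hstat a μ' hμ' ℱ hFmeas ν1 hν1 ε
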